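/- Let h : ℕ → ℤ satisfy h(1) = 9, h(2) = 45, and suppose h agrees on {1,...,6} with a polynomial of degree at most 3. If additionally h(3) ∈ {0, 160, 320, 480, 640, 800} and h(3) ≥ h(2), then h(3) = 160 forces the cubic interpolating (1,9), (2,45), (3,160) together with any admissible value h(4) ∈ {0, 45, 180, 225, 270, 315, 450, 495} to give h(5) and h(6) values, at least one of which fails to be a partial sum of [36,90,135,216,270,540] and [4,15,24,80,80,240,240,240,480,480,480,640] respectively. -/

import Mathlib

/-!
A cubic has vanishing fourth finite difference, so `h 5 = 4 h 4 - 6 h 3 + 4 h 2 - h 1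
= 4 h 4 - 6 h 3 + 171`. Every element of `{36, 90, 135, 216, 270, 540}` is a nonnegative multiple
of `9`, hence so is every partial sum. Writing `h 3 = 160 k` with `1 ≤ k ≤ 5` and using `9 ∣ h 4`,
divisibility of `h 5` by `9` forces `3 ∣ k`, i.e. `h 3 = 480`; but then
`h 5 ≤ 4 · 495 - 2880 + 171 < 0`.
-/

/-- `x` is a sum of a sub-multiset of `M`. -/
def IsPartialSum (M : Multiset ℤ) (x : ℤ) : Prop :=
  ∃ s : Multiset ℤ, s ≤ M ∧ s.sum = x

namespace IsPartialSum

variable {M : Multiset ℤ} {x : ℤ}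

theorem dvd {d : ℤ} (hx : IsPartialSum M x) (hM : ∀ a ∈ M, d ∣ a) : d ∣ x := by
  obtain ⟨s, hs, rfl⟩ := hx
  exact Multiset.dvd_sum fun a ha ↦ hM a (Multiset.mem_of_le hs ha)

theorem nonneg (hx : IsPartialSum M x) (hM : ∀ a ∈ M, 0 ≤ a) : 0 ≤ x := by
  obtain ⟨s, hs, rfl⟩ := hx
  exact Multiset.sum_nonneg fun a ha ↦ hM a (Multiset.mem_of_le hs ha)

end IsPartialSum

theorem Polynomial.eval_add_four_of_degree_le_three {R : Type*} [CommRing R] {P : Polynomial R}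
    (hP : P.degree ≤ 3) (x : R) :
    P.eval (x + 4) = 4 * P.eval (x + 3) - 6 * P.eval (x + 2) + 4 * P.eval (x + 1) - P.eval x := by
  have hP' : P.natDegree < 4 := Nat.lt_succ_of_le (natDegree_le_iff_degree_le.mpr hP)
  have hΔ := congr_fun (fwdDiff_iter_eq_zero_of_degree_lt hP') x
  norm_num [fwdDiff_iter_eq_sum_shift, Finset.sum_range_succ, Nat.choose] at hΔ
  linear_combination hΔ

theorem cubic_finite_check (h : ℕ → ℤ) (P : Polynomial ℚ)
    (h1 : h 1 = 9) (h2 : h 2 = 45)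
    (hdeg : P.degree ≤ 3)
    (hval : ∀ m ∈ Finset.Icc 1 6, (h m : ℚ) = P.eval (m : ℚ))
    (h3mem : h 3 ∈ ({0, 160, 320, 480, 640, 800} : Finset ℤ))
    (h3ge : h 2 ≤ h 3)
    (h4mem : h 4 ∈ ({0, 45, 180, 225, 270, 315, 450, 495} : Finset ℤ)) :
    ¬ (IsPartialSum {36, 90, 135, 216, 270, 540} (h 5) ∧
       IsPartialSum {4, 15, 24, 80, 80, 240, 240, 240, 480, 480, 480, 640} (h 6)) := by
  have h5 : h 5 = 4 * h 4 - 6 * h 3 + 171 := by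
    have hcubic := P.eval_add_four_of_degree_le_three hdeg 1
    have q1 := hval 1 (by decide)
    have q2 := hval 2 (by decide)
    have q3 := hval 3 (by decide)
    have q4 := hval 4 (by decide)
    have q5 := hval 5 (by decide)
    norm_num at hcubic q1 q2 q3 q4 q5
    rw [← q1, ← q2, ← q3, ← q4, ← q5, h1, h2] at hcubic
    qify
    linear_combination hcubic
  rintro ⟨h5sum, -⟩
  have h5dvd : 9 ∣ h 5 := h5sum.dvd (by decide)
  have h5nonneg : 0 ≤ h 5 := h5sum.nonneg (by decide)
  simp only [Finset.mem_insert, Finset.mem_singleton] at h3mem h4mem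
  omega
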